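/- arXiv:2311.08895 — 3 statements merged into one kernel-verified Lean document; each statement's English description precedes it below -/
import Mathlib

section
/- For every real number a > 0 and every point x ∈ Ω_n, the map φ_a is differentiable at x and the determinant of its Jacobian matrix satisfies det Dφ_a(x) = a·x_n^{aγ − n}; in particular det Dφ_a(x) > 0 everywhere on Ω_n. -/
/-!
Each coordinate `x_i x_n^{aγ_i - 1}` (`i < n`) of `φ_a` depends only on `x_i` and `x_n`, and the
last one only on `x_n`, so the Jacobian matrix is upper triangular with diagonal entries
`x_n^{aγ_i - 1}` and `a x_n^{a - 1}`, whose product is `a x_n^{aγ - n}`.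
-/

open MeasureTheory Real Finset
open scoped ENNReal BigOperators

noncomputable section

/-- The model Lipschitz domain `Ω_n` (dimension `n+1`): `0 < x_last < 1` and
`0 < x_i < x_last` for the first `n` coordinates. -/
def OmegaModel (n : ℕ) : Set (EuclideanSpace ℝ (Fin (n + 1))) :=
  {x | 0 < x (Fin.last n) ∧ x (Fin.last n) < 1 ∧
    ∀ i : Fin n, 0 < x i.castSucc ∧ x i.castSucc < x (Fin.last n)}

/-- The outward cuspidal domain `Ω_γ` (dimension `n+1`) with Hölder exponents `γi`. -/
def OmegaGamma (n : ℕ) (γi : Fin n → ℝ) : Set (EuclideanSpace ℝ (Fin (n + 1))) :=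
  {x | 0 < x (Fin.last n) ∧ x (Fin.last n) < 1 ∧
    ∀ i : Fin n, 0 < x i.castSucc ∧ x i.castSucc < x (Fin.last n) ^ γi i}

/-- The cusp map `φ_a(x) = (x_1 x_last^{aγ_1-1}, …, x_n x_last^{aγ_n-1}, x_last^a)`. -/
def phiMap (n : ℕ) (γi : Fin n → ℝ) (a : ℝ)
    (x : EuclideanSpace ℝ (Fin (n + 1))) : EuclideanSpace ℝ (Fin (n + 1)) :=
  WithLp.toLp 2 (fun j => Fin.lastCases (x (Fin.last n) ^ a)
    (fun i => x i.castSucc * x (Fin.last n) ^ (a * γi i - 1)) j)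

theorem fderiv_piLp_apply {𝕜 ι H : Type*} {E : ι → Type*} [NontriviallyNormedField 𝕜]
    [NormedAddCommGroup H] [NormedSpace 𝕜 H] [∀ i, NormedAddCommGroup (E i)]
    [∀ i, NormedSpace 𝕜 (E i)] [Fintype ι] {p : ℝ≥0∞} [Fact (1 ≤ p)]
    {f : H → PiLp p E} {x : H} (hf : DifferentiableAt 𝕜 f x) (i : ι) (v : H) :
    fderiv 𝕜 f x v i = fderiv 𝕜 (fun y => f y i) x v := by
  rw [show (fun y => f y i) = (fun g : PiLp p E => g i) ∘ f from rfl,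
    ((PiLp.hasFDerivAt_apply p (f x) i).comp x hf.hasFDerivAt).fderiv]
  rfl

theorem ContinuousLinearMap.det_eq_det_of_apply_single {ι : Type*} [Fintype ι] [DecidableEq ι]
    (L : EuclideanSpace ℝ ι →L[ℝ] EuclideanSpace ℝ ι) :
    L.det = (Matrix.of fun i j => L (EuclideanSpace.single j 1) i).det := by
  rw [ContinuousLinearMap.det, ← LinearMap.det_toMatrix (EuclideanSpace.basisFun ι ℝ).toBasis]
  congr 1

theorem EuclideanSpace.hasFDerivAt_apply_rpow {ι : Type*} [Fintype ι] {x : EuclideanSpace ℝ ι}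
    {j : ι} (hx : x j ≠ 0) (p : ℝ) :
    HasFDerivAt (fun y : EuclideanSpace ℝ ι => y j ^ p)
      ((p * x j ^ (p - 1)) • EuclideanSpace.proj (𝕜 := ℝ) j) x :=
  (hasDerivAt_rpow_const (Or.inl hx)).comp_hasFDerivAt
    (f := fun y : EuclideanSpace ℝ ι => y j) x (PiLp.hasFDerivAt_apply (𝕜 := ℝ) 2 x j)

section phiMap

variable {n : ℕ} (γi : Fin n → ℝ) (a : ℝ) {x : EuclideanSpace ℝ (Fin (n + 1))}

theorem phiMap_apply_castSucc (k : Fin n) :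
    (fun y => phiMap n γi a y k.castSucc) =
      fun y => y k.castSucc * y (Fin.last n) ^ (a * γi k - 1) := by
  ext y
  simp [phiMap]

theorem phiMap_apply_last :
    (fun y => phiMap n γi a y (Fin.last n)) = fun y => y (Fin.last n) ^ a := by
  ext y
  simp [phiMap]

theorem hasFDerivAt_phiMap_apply_castSucc (hx : x (Fin.last n) ≠ 0) (k : Fin n) :
    HasFDerivAt (fun y => phiMap n γi a y k.castSucc)
      (x k.castSucc • (((a * γi k - 1) * x (Fin.last n) ^ (a * γi k - 1 - 1)) •
          EuclideanSpace.proj (𝕜 := ℝ) (Fin.last n)) +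
        x (Fin.last n) ^ (a * γi k - 1) • EuclideanSpace.proj (𝕜 := ℝ) k.castSucc) x := by
  rw [phiMap_apply_castSucc]
  exact (PiLp.hasFDerivAt_apply 2 x k.castSucc).mul
    (EuclideanSpace.hasFDerivAt_apply_rpow hx _)

theorem hasFDerivAt_phiMap_apply_last (hx : x (Fin.last n) ≠ 0) :
    HasFDerivAt (fun y => phiMap n γi a y (Fin.last n))
      ((a * x (Fin.last n) ^ (a - 1)) • EuclideanSpace.proj (𝕜 := ℝ) (Fin.last n)) x := by
  rw [phiMap_apply_last]
  exact EuclideanSpace.hasFDerivAt_apply_rpow hx a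

theorem differentiableAt_phiMap (hx : x (Fin.last n) ≠ 0) :
    DifferentiableAt ℝ (phiMap n γi a) x := by
  refine (differentiableAt_piLp 2).2 fun i => ?_
  induction i using Fin.lastCases with
  | last => exact (hasFDerivAt_phiMap_apply_last γi a hx).differentiableAt
  | cast k => exact (hasFDerivAt_phiMap_apply_castSucc γi a hx k).differentiableAt

theorem fderiv_phiMap_apply_castSucc (hx : x (Fin.last n) ≠ 0) (k : Fin n)
    (v : EuclideanSpace ℝ (Fin (n + 1))) :
    fderiv ℝ (phiMap n γi a) x v k.castSucc =
      x k.castSucc * ((a * γi k - 1) * x (Fin.last n) ^ (a * γi k - 1 - 1)) * v (Fin.last n) +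
        x (Fin.last n) ^ (a * γi k - 1) * v k.castSucc := by
  rw [fderiv_piLp_apply (differentiableAt_phiMap γi a hx),
    (hasFDerivAt_phiMap_apply_castSucc γi a hx k).fderiv]
  simp [mul_assoc]

theorem fderiv_phiMap_apply_last (hx : x (Fin.last n) ≠ 0)
    (v : EuclideanSpace ℝ (Fin (n + 1))) :
    fderiv ℝ (phiMap n γi a) x v (Fin.last n) =
      a * x (Fin.last n) ^ (a - 1) * v (Fin.last n) := by
  rw [fderiv_piLp_apply (differentiableAt_phiMap γi a hx),
    (hasFDerivAt_phiMap_apply_last γi a hx).fderiv]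
  simp

theorem isUpperTriangular_fderiv_phiMap (hx : x (Fin.last n) ≠ 0) :
    (Matrix.of fun i j =>
      fderiv ℝ (phiMap n γi a) x (EuclideanSpace.single j 1) i).IsUpperTriangular := by
  intro i j (hji : j < i)
  have hj : j ≠ Fin.last n := (hji.trans_le (Fin.le_last i)).ne
  induction i using Fin.lastCases with
  | last => simp [fderiv_phiMap_apply_last γi a hx, hj]
  | cast k => simp [fderiv_phiMap_apply_castSucc γi a hx, hj, hji.ne']

theorem det_fderiv_phiMap (hx : 0 < x (Fin.last n)) :
    (fderiv ℝ (phiMap n γi a) x).det =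
      a * x (Fin.last n) ^ (a * (1 + ∑ i, γi i) - (n + 1 : ℝ)) := by
  rw [ContinuousLinearMap.det_eq_det_of_apply_single,
    Matrix.det_of_isUpperTriangular (isUpperTriangular_fderiv_phiMap γi a hx.ne'),
    Fin.prod_univ_castSucc]
  simp only [Matrix.of_apply, fderiv_phiMap_apply_castSucc γi a hx.ne',
    fderiv_phiMap_apply_last γi a hx.ne', ne_eq, Fin.castSucc_ne_last, not_false_eq_true,
    PiLp.single_eq_of_ne', PiLp.single_eq_same, mul_zero, mul_one, zero_add]
  rw [← rpow_sum_of_pos hx, mul_left_comm, ← rpow_add hx, sum_sub_distrib, ← mul_sum]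
  congr 2
  rw [sum_const, card_univ, Fintype.card_fin, nsmul_one]
  ring

end phiMap

theorem statement1_general (n : ℕ) (γi : Fin n → ℝ)
    (γ : ℝ) (hγ : γ = 1 + ∑ i, γi i)
    (a : ℝ) (ha : 0 < a)
    (x : EuclideanSpace ℝ (Fin (n + 1))) (hx : x ∈ OmegaModel n) :
    DifferentiableAt ℝ (phiMap n γi a) x ∧
    (fderiv ℝ (phiMap n γi a) x).det = a * x (Fin.last n) ^ (a * γ - (n + 1 : ℝ)) ∧
    0 < (fderiv ℝ (phiMap n γi a) x).det := by
  have hlast : 0 < x (Fin.last n) := hx.1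
  have hdet := det_fderiv_phiMap γi a hlast
  rw [← hγ] at hdet
  exact ⟨differentiableAt_phiMap γi a hlast.ne', hdet,
    hdet ▸ mul_pos ha (rpow_pos_of_pos hlast _)⟩

/-- For every `a > 0` and every `x ∈ Ω_n`, the map `φ_a` is differentiable
at `x` and the determinant of its Jacobian matrix equals `a · x_last^{aγ - (n+1)}`,
where `γ = 1 + γ_1 + ⋯ + γ_n`; in particular the Jacobian determinant is positive.
(Paper dimension `n` corresponds to Lean dimension `n + 1`.) -/
theorem statement1 (n : ℕ) (hn : 1 ≤ n) (γi : Fin n → ℝ) (hγi : ∀ i, 1 ≤ γi i)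
    (γ : ℝ) (hγ : γ = 1 + ∑ i, γi i)
    (a : ℝ) (ha : 0 < a)
    (x : EuclideanSpace ℝ (Fin (n + 1))) (hx : x ∈ OmegaModel n) :
    DifferentiableAt ℝ (phiMap n γi a) x ∧
    (fderiv ℝ (phiMap n γi a) x).det = a * x (Fin.last n) ^ (a * γ - (n + 1 : ℝ)) ∧
    0 < (fderiv ℝ (phiMap n γi a) x).det :=
  statement1_general n γi γ hγ a ha x hx
end
end

section
/- Under the hypotheses −n < α < n(p−1), 1 < p < α + γ, max{0, (n−p)/(α+γ−p)} < a < p(n−1)/(α+γ−p), if in addition 1 < s < (n−1)p/(a(α+γ−p)+p+1), then ∫_{Ω_n} ( ‖Dφ_a(x)‖^p / ( a·x_n^{aγ−n} · |φ_a(x)|^α ) )^{s/(p−s)} dx ≤ ( ( Σ_{i=1}^{n-1} (aγ_i − 1)^2 + n − 1 + a^2 )^{p/2} / (a·c_a) )^{s/(p−s)}, where c_a = min{1, n^{α/2}}. -/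
open MeasureTheory Real Finset
open scoped ENNReal BigOperators

noncomputable section

/-!
On `Ω_n` everything is controlled by the last coordinate `t = x_n`: since `0 < x_i < t < 1` and
`aγ_i ≥ a`, one has `t^a ≤ |φ_a(x)| ≤ √n t^a`, and the row-wise (Frobenius) bound gives
`‖Dφ_a(x)‖ ≤ √(Σ (aγ_i - 1)² + n - 1 + a²) t^(a-1)`. So the integrand is at most the right-hand
side times `t^r`, `r = (s/(p-s))((a-1)p - aγ + n - aα)`. The slice of `Ω_n` at height `t` is a
cube of volume `t^(n-1)`, hence `∫_{Ω_n} t^r = ∫_0^1 t^(r+n-1) dt ≤ 1` once `r + n - 1 ≥ 0`,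
which is what the upper bound on `s` guarantees.
-/

theorem EuclideanSpace.norm_le_sqrt_sum_of_sq_le {ι : Type*} [Fintype ι]
    (v : EuclideanSpace ℝ ι) (R : ι → ℝ) (h : ∀ j, v j ^ 2 ≤ R j) :
    ‖v‖ ≤ √(∑ j, R j) := by
  rw [EuclideanSpace.norm_eq]
  exact Real.sqrt_le_sqrt (sum_le_sum fun j _ => by simpa [sq_abs] using h j)

theorem EuclideanSpace.opNorm_le_sqrt_sum_of_sq_apply_le {E ι : Type*} [SeminormedAddCommGroup E]
    [NormedSpace ℝ E] [Fintype ι] (f : E →L[ℝ] EuclideanSpace ℝ ι) (R : ι → ℝ)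
    (h : ∀ v j, f v j ^ 2 ≤ R j * ‖v‖ ^ 2) : ‖f‖ ≤ √(∑ j, R j) := by
  refine f.opNorm_le_bound (Real.sqrt_nonneg _) fun v => ?_
  calc ‖f v‖ ≤ √(∑ j, R j * ‖v‖ ^ 2) := EuclideanSpace.norm_le_sqrt_sum_of_sq_le _ _ (h v)
    _ = √(∑ j, R j) * ‖v‖ := by
      rw [← sum_mul, Real.sqrt_mul' _ (by positivity), Real.sqrt_sq (norm_nonneg v)]

theorem EuclideanSpace.sq_apply_le_norm_sq {ι : Type*} [Fintype ι] (v : EuclideanSpace ℝ ι)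
    (j : ι) : v j ^ 2 ≤ ‖v‖ ^ 2 := by
  simpa [sq_abs] using pow_le_pow_left₀ (norm_nonneg _) (PiLp.norm_apply_le v j) 2

theorem EuclideanSpace.sq_add_sq_apply_le_norm_sq {ι : Type*} [Fintype ι]
    (v : EuclideanSpace ℝ ι) {j k : ι} (hjk : j ≠ k) : v j ^ 2 + v k ^ 2 ≤ ‖v‖ ^ 2 := by
  classical
  rw [EuclideanSpace.real_norm_sq_eq, ← sum_pair (f := fun i => v i ^ 2) hjk]
  exact sum_le_sum_of_subset_of_nonneg (subset_univ _) fun i _ _ => sq_nonneg _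

theorem mul_rpow_sub_one_le {y t : ℝ} (b : ℝ) (ht : 0 < t) (hy : y ≤ t) :
    y * t ^ (b - 1) ≤ t ^ b :=
  calc y * t ^ (b - 1) ≤ t * t ^ (b - 1) := by gcongr
    _ = t ^ b := by rw [mul_comm, ← rpow_add_one ht.ne', sub_add_cancel]

theorem hasFDerivAt_piLp {𝕜 ι H : Type*} {E : ι → Type*} [NontriviallyNormedField 𝕜]
    [NormedAddCommGroup H] [NormedSpace 𝕜 H] [∀ i, NormedAddCommGroup (E i)]
    [∀ i, NormedSpace 𝕜 (E i)] [Finite ι] (p : ℝ≥0∞) [Fact (1 ≤ p)] {f : H → PiLp p E}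
    {f' : H →L[𝕜] PiLp p E} {y : H} :
    HasFDerivAt f f' y ↔ ∀ i, HasFDerivAt (fun x => f x i) (PiLp.proj p E i ∘L f') y := by
  simp_rw [← hasFDerivWithinAt_univ]
  exact hasFDerivWithinAt_piLp p

theorem min_one_rpow_mul_rpow_le_rpow {u N c α : ℝ} (hu : 0 < u) (hc : 0 ≤ c) (hlow : u ≤ N)
    (hup : N ≤ c * u) : min 1 (c ^ α) * u ^ α ≤ N ^ α := by
  rcases le_or_gt 0 α with hα | hα
  · calc min 1 (c ^ α) * u ^ α ≤ 1 * u ^ α := by gcongr; exact min_le_left _ _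
      _ ≤ N ^ α := by rw [one_mul]; exact rpow_le_rpow hu.le hlow hα
  · calc min 1 (c ^ α) * u ^ α ≤ c ^ α * u ^ α := by gcongr; exact min_le_right _ _
      _ = (c * u) ^ α := (mul_rpow hc hu.le).symm
      _ ≤ N ^ α := rpow_le_rpow_of_nonpos (hu.trans_le hlow) hup hα.le

theorem integral_le_of_ae_le_mul {α : Type*} [MeasurableSpace α] {μ : Measure α} {f g : α → ℝ}
    {K : ℝ} (hK : 0 ≤ K) (hf : ∀ᵐ x ∂μ, 0 ≤ f x ∧ f x ≤ K * g x)
    (hg : ∫⁻ x, ENNReal.ofReal (g x) ∂μ ≤ 1) : ∫ x, f x ∂μ ≤ K := by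
  have hlint : ∫⁻ x, ENNReal.ofReal ‖f x‖ ∂μ ≤ ENNReal.ofReal K :=
    calc ∫⁻ x, ENNReal.ofReal ‖f x‖ ∂μ ≤ ∫⁻ x, ENNReal.ofReal K * ENNReal.ofReal (g x) ∂μ := by
          refine lintegral_mono_ae (hf.mono fun x hx => ?_)
          rw [← ENNReal.ofReal_mul hK, Real.norm_of_nonneg hx.1]
          exact ENNReal.ofReal_le_ofReal hx.2
      _ = ENNReal.ofReal K * ∫⁻ x, ENNReal.ofReal (g x) ∂μ :=
          lintegral_const_mul' _ _ ENNReal.ofReal_ne_top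
      _ ≤ ENNReal.ofReal K := mul_le_of_le_one_right' hg
  calc ∫ x, f x ∂μ ≤ ‖∫ x, f x ∂μ‖ := Real.le_norm_self _
    _ ≤ (∫⁻ x, ENNReal.ofReal ‖f x‖ ∂μ).toReal := norm_integral_le_lintegral_norm f
    _ ≤ K := ENNReal.toReal_le_of_le_ofReal hK hlint

theorem measurableSet_omegaModel (n : ℕ) : MeasurableSet (OmegaModel n) := by
  unfold OmegaModel
  measurability

def lastCoordEquiv (n : ℕ) : ℝ × (Fin n → ℝ) ≃ᵐ EuclideanSpace ℝ (Fin (n + 1)) :=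
  (MeasurableEquiv.piFinSuccAbove (fun _ => ℝ) (Fin.last n)).symm.trans
    (MeasurableEquiv.toLp 2 _)

theorem measurePreserving_lastCoordEquiv (n : ℕ) : MeasurePreserving (lastCoordEquiv n) :=
  (volume_preserving_piFinSuccAbove (fun _ => ℝ) (Fin.last n)).symm.trans
    (PiLp.volume_preserving_toLp _)

@[simp]
theorem lastCoordEquiv_apply_last {n : ℕ} (p : ℝ × (Fin n → ℝ)) :
    lastCoordEquiv n p (Fin.last n) = p.1 := by
  simp [lastCoordEquiv, MeasurableEquiv.piFinSuccAbove_symm_apply]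

@[simp]
theorem lastCoordEquiv_apply_castSucc {n : ℕ} (p : ℝ × (Fin n → ℝ)) (i : Fin n) :
    lastCoordEquiv n p i.castSucc = p.2 i := by
  simp [lastCoordEquiv, MeasurableEquiv.piFinSuccAbove_symm_apply]

theorem lastCoordEquiv_mem_omegaModel_iff {n : ℕ} {t : ℝ} {z : Fin n → ℝ} :
    lastCoordEquiv n (t, z) ∈ OmegaModel n ↔
      t ∈ Set.Ioo 0 1 ∧ z ∈ Set.univ.pi fun _ => Set.Ioo 0 t := by
  simp [OmegaModel, and_assoc]

theorem lintegral_omegaModel_comp_last (n : ℕ) {g : ℝ → ℝ≥0∞} (hg : Measurable g) :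
    ∫⁻ x in OmegaModel n, g (x (Fin.last n)) =
      ∫⁻ t in Set.Ioo 0 1, g t * ENNReal.ofReal t ^ n := by
  set e := lastCoordEquiv n
  have hS : MeasurableSet (e ⁻¹' OmegaModel n) := e.measurable (measurableSet_omegaModel n)
  have hslice : ∀ t z, (e ⁻¹' OmegaModel n).indicator (fun p => g p.1) (t, z) =
      (Set.Ioo 0 1).indicator g t * (Set.univ.pi fun _ => Set.Ioo 0 t).indicator 1 z := by
    intro t z
    by_cases ht : t ∈ Set.Ioo 0 1 <;> by_cases hz : z ∈ Set.univ.pi fun _ => Set.Ioo 0 t <;>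
      simp [Set.indicator, e, lastCoordEquiv_mem_omegaModel_iff, ht, hz]
  rw [← (measurePreserving_lastCoordEquiv n).setLIntegral_comp_preimage_emb e.measurableEmbedding]
  simp only [lastCoordEquiv_apply_last]
  rw [← lintegral_indicator hS, Measure.volume_eq_prod,
    lintegral_prod _ (hg.comp measurable_fst |>.indicator (f := fun p => g p.1) hS).aemeasurable,
    ← lintegral_indicator measurableSet_Ioo]
  refine lintegral_congr fun t => ?_
  simp only [hslice]
  have hcube : MeasurableSet (Set.univ.pi fun _ : Fin n => Set.Ioo 0 t) :=
    MeasurableSet.univ_pi fun _ => measurableSet_Ioo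
  rw [lintegral_const_mul _ (measurable_one.indicator hcube), lintegral_indicator_one hcube,
    volume_pi_pi]
  simp [Real.volume_Ioo, Set.indicator_mul_left]

theorem lintegral_omegaModel_rpow_last_le_one (n : ℕ) {r : ℝ} (hr : 0 ≤ r + n) :
    ∫⁻ x in OmegaModel n, ENNReal.ofReal (x (Fin.last n) ^ r) ≤ 1 := by
  rw [lintegral_omegaModel_comp_last n (g := fun t => ENNReal.ofReal (t ^ r)) (by fun_prop)]
  calc ∫⁻ t in Set.Ioo 0 1, ENNReal.ofReal (t ^ r) * ENNReal.ofReal t ^ n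
      ≤ ∫⁻ _ in Set.Ioo (0 : ℝ) 1, 1 := by
        refine setLIntegral_mono measurable_const fun t ⟨ht0, ht1⟩ => ?_
        rw [← ENNReal.ofReal_pow ht0.le, ← ENNReal.ofReal_mul (rpow_nonneg ht0.le _),
          ← rpow_natCast, ← rpow_add ht0]
        exact ENNReal.ofReal_le_one.2 (rpow_le_one ht0.le ht1.le hr)
    _ = 1 := by simp

def phiMapFDeriv (n : ℕ) (γi : Fin n → ℝ) (a : ℝ) (x : EuclideanSpace ℝ (Fin (n + 1))) :
    EuclideanSpace ℝ (Fin (n + 1)) →L[ℝ] EuclideanSpace ℝ (Fin (n + 1)) :=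
  (PiLp.continuousLinearEquiv 2 ℝ _).symm.toContinuousLinearMap ∘L
    ContinuousLinearMap.pi (Fin.lastCases
      ((a * x (Fin.last n) ^ (a - 1)) • EuclideanSpace.proj (Fin.last n))
      (fun i => x (Fin.last n) ^ (a * γi i - 1) • EuclideanSpace.proj i.castSucc +
        ((a * γi i - 1) * (x i.castSucc * x (Fin.last n) ^ (a * γi i - 1 - 1))) •
          EuclideanSpace.proj (Fin.last n)))

section phiMap

variable {n : ℕ} {γi : Fin n → ℝ} {a : ℝ}

@[simp]
theorem phiMap_last (x : EuclideanSpace ℝ (Fin (n + 1))) :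
    phiMap n γi a x (Fin.last n) = x (Fin.last n) ^ a := by
  simp [phiMap]

@[simp]
theorem phiMap_castSucc (x : EuclideanSpace ℝ (Fin (n + 1))) (i : Fin n) :
    phiMap n γi a x i.castSucc = x i.castSucc * x (Fin.last n) ^ (a * γi i - 1) := by
  simp [phiMap]

@[simp]
theorem phiMapFDeriv_apply_last (x v : EuclideanSpace ℝ (Fin (n + 1))) :
    phiMapFDeriv n γi a x v (Fin.last n) = a * x (Fin.last n) ^ (a - 1) * v (Fin.last n) := by
  simp [phiMapFDeriv]

@[simp]
theorem phiMapFDeriv_apply_castSucc (x v : EuclideanSpace ℝ (Fin (n + 1))) (i : Fin n) :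
    phiMapFDeriv n γi a x v i.castSucc =
      x (Fin.last n) ^ (a * γi i - 1) * v i.castSucc +
        (a * γi i - 1) * (x i.castSucc * x (Fin.last n) ^ (a * γi i - 1 - 1)) * v (Fin.last n) := by
  simp [phiMapFDeriv]

theorem hasFDerivAt_phiMap {x : EuclideanSpace ℝ (Fin (n + 1))} (hx : 0 < x (Fin.last n)) :
    HasFDerivAt (phiMap n γi a) (phiMapFDeriv n γi a x) x := by
  refine (hasFDerivAt_piLp 2).2 fun j => ?_
  have hlast := PiLp.hasFDerivAt_apply (𝕜 := ℝ) 2 x (Fin.last n)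
  induction j using Fin.lastCases with
  | last =>
    simp only [phiMap_last]
    refine ((hasDerivAt_rpow_const (p := a) (Or.inl hx.ne')).comp_hasFDerivAt x hlast)
      |>.congr_fderiv ?_
    ext v
    simp
  | cast i =>
    simp only [phiMap_castSucc]
    refine ((PiLp.hasFDerivAt_apply (𝕜 := ℝ) 2 x i.castSucc).mul
      ((hasDerivAt_rpow_const (p := a * γi i - 1) (Or.inl hx.ne')).comp_hasFDerivAt x hlast))
      |>.congr_fderiv ?_
    ext v
    simp only [Function.comp_apply, add_apply, smul_apply, ContinuousLinearMap.comp_apply,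
      PiLp.proj_apply, smul_eq_mul, phiMapFDeriv_apply_castSucc]
    ring

variable {x : EuclideanSpace ℝ (Fin (n + 1))}

theorem le_norm_phiMap (hx : 0 ≤ x (Fin.last n)) : x (Fin.last n) ^ a ≤ ‖phiMap n γi a x‖ := by
  simpa [abs_of_nonneg (rpow_nonneg hx a)] using PiLp.norm_apply_le (phiMap n γi a x) (Fin.last n)

theorem sq_phiMap_apply_le (hγi : ∀ i, 1 ≤ γi i) (ha : 0 ≤ a) (hx : x ∈ OmegaModel n)
    (j : Fin (n + 1)) :
    phiMap n γi a x j ^ 2 ≤ (x (Fin.last n) ^ a) ^ 2 := by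
  obtain ⟨ht0, ht1, hxi⟩ := hx
  induction j using Fin.lastCases with
  | last => simp
  | cast i =>
    rw [phiMap_castSucc]
    gcongr
    · exact mul_nonneg (hxi i).1.le (rpow_nonneg ht0.le _)
    calc x i.castSucc * x (Fin.last n) ^ (a * γi i - 1) ≤ x (Fin.last n) ^ (a * γi i) :=
          mul_rpow_sub_one_le _ ht0 (hxi i).2.le
      _ ≤ x (Fin.last n) ^ a := rpow_le_rpow_of_exponent_ge ht0 ht1.le (by nlinarith [hγi i])

theorem norm_phiMap_le (hγi : ∀ i, 1 ≤ γi i) (ha : 0 ≤ a) (hx : x ∈ OmegaModel n) :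
    ‖phiMap n γi a x‖ ≤ √(n + 1) * x (Fin.last n) ^ a := by
  refine (EuclideanSpace.norm_le_sqrt_sum_of_sq_le _ _ (sq_phiMap_apply_le hγi ha hx)).trans_eq ?_
  rw [sum_const, card_univ, Fintype.card_fin, nsmul_eq_mul, Real.sqrt_mul' _ (sq_nonneg _),
    Real.sqrt_sq (rpow_nonneg hx.1.le a)]
  push_cast
  rfl

theorem sq_phiMapFDeriv_apply_castSucc_le (hγi : ∀ i, 1 ≤ γi i) (ha : 0 ≤ a) (hx : x ∈ OmegaModel n)
    (v : EuclideanSpace ℝ (Fin (n + 1))) (i : Fin n) :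
    phiMapFDeriv n γi a x v i.castSucc ^ 2 ≤
      (1 + (a * γi i - 1) ^ 2) * (x (Fin.last n) ^ (a - 1)) ^ 2 * ‖v‖ ^ 2 := by
  obtain ⟨ht0, ht1, hxi⟩ := hx
  set t := x (Fin.last n)
  set b := a * γi i - 1
  have hmono : t ^ b ≤ t ^ (a - 1) :=
    rpow_le_rpow_of_exponent_ge ht0 ht1.le (by nlinarith [hγi i])
  have hy : x i.castSucc * t ^ (b - 1) ≤ t ^ (a - 1) :=
    (mul_rpow_sub_one_le _ ht0 (hxi i).2.le).trans hmono
  have hy0 : 0 ≤ x i.castSucc * t ^ (b - 1) := mul_nonneg (hxi i).1.le (rpow_nonneg ht0.le _)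
  have hv := EuclideanSpace.sq_add_sq_apply_le_norm_sq v (Fin.castSucc_lt_last i).ne
  rw [phiMapFDeriv_apply_castSucc]
  calc (t ^ b * v i.castSucc + b * (x i.castSucc * t ^ (b - 1)) * v (Fin.last n)) ^ 2
      ≤ ((t ^ b) ^ 2 + b ^ 2 * (x i.castSucc * t ^ (b - 1)) ^ 2) *
          (v i.castSucc ^ 2 + v (Fin.last n) ^ 2) := by
        nlinarith [sq_nonneg
          (t ^ b * v (Fin.last n) - b * (x i.castSucc * t ^ (b - 1)) * v i.castSucc)]
    _ ≤ ((t ^ (a - 1)) ^ 2 + b ^ 2 * (t ^ (a - 1)) ^ 2) * ‖v‖ ^ 2 := by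
        gcongr
    _ = (1 + b ^ 2) * (t ^ (a - 1)) ^ 2 * ‖v‖ ^ 2 := by ring

theorem norm_phiMapFDeriv_le (hγi : ∀ i, 1 ≤ γi i) (ha : 0 ≤ a) (hx : x ∈ OmegaModel n) :
    ‖phiMapFDeriv n γi a x‖ ≤
      √((∑ i, (a * γi i - 1) ^ 2) + n + a ^ 2) * x (Fin.last n) ^ (a - 1) := by
  set τ := x (Fin.last n) ^ (a - 1)
  let R : Fin (n + 1) → ℝ :=
    Fin.lastCases (a ^ 2 * τ ^ 2) fun i => (1 + (a * γi i - 1) ^ 2) * τ ^ 2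
  have hR : ∀ v j, phiMapFDeriv n γi a x v j ^ 2 ≤ R j * ‖v‖ ^ 2 := by
    intro v j
    induction j using Fin.lastCases with
    | last =>
      simpa [R, mul_pow] using mul_le_mul_of_nonneg_left
        (EuclideanSpace.sq_apply_le_norm_sq v (Fin.last n)) (by positivity : 0 ≤ a ^ 2 * τ ^ 2)
    | cast i => simpa [R] using sq_phiMapFDeriv_apply_castSucc_le hγi ha hx v i
  have hsum : ∑ j, R j = ((∑ i, (a * γi i - 1) ^ 2) + n + a ^ 2) * τ ^ 2 := by
    simp only [R, Fin.sum_univ_castSucc, Fin.lastCases_last, Fin.lastCases_castSucc, ← sum_mul,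
      sum_add_distrib, sum_const, card_univ, Fintype.card_fin, nsmul_eq_mul, mul_one]
    ring
  refine (EuclideanSpace.opNorm_le_sqrt_sum_of_sq_apply_le _ R hR).trans_eq ?_
  rw [hsum, Real.sqrt_mul' _ (sq_nonneg _), Real.sqrt_sq (rpow_nonneg hx.1.le _)]

theorem rpow_norm_fderiv_phiMap_le (hγi : ∀ i, 1 ≤ γi i) (ha : 0 ≤ a) (hx : x ∈ OmegaModel n)
    {p : ℝ} (hp : 0 ≤ p) :
    ‖fderiv ℝ (phiMap n γi a) x‖ ^ p ≤
      ((∑ i, (a * γi i - 1) ^ 2) + n + a ^ 2) ^ (p / 2) * x (Fin.last n) ^ ((a - 1) * p) := by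
  rw [(hasFDerivAt_phiMap hx.1).fderiv, rpow_div_two_eq_sqrt _ (by positivity),
    rpow_mul hx.1.le, ← mul_rpow (sqrt_nonneg _) (rpow_nonneg hx.1.le _)]
  exact rpow_le_rpow (norm_nonneg _) (norm_phiMapFDeriv_le hγi ha hx) hp

theorem min_mul_rpow_le_rpow_norm_phiMap (hγi : ∀ i, 1 ≤ γi i) (ha : 0 ≤ a)
    (hx : x ∈ OmegaModel n) (α : ℝ) :
    min 1 ((n + 1 : ℝ) ^ (α / 2)) * x (Fin.last n) ^ (a * α) ≤ ‖phiMap n γi a x‖ ^ α := by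
  rw [rpow_div_two_eq_sqrt _ (by positivity), rpow_mul hx.1.le]
  exact min_one_rpow_mul_rpow_le_rpow (rpow_pos_of_pos hx.1 a) (sqrt_nonneg _)
    (le_norm_phiMap hx.1.le) (norm_phiMap_le hγi ha hx)

theorem phiMap_integrand_le (hγi : ∀ i, 1 ≤ γi i) (ha : 0 < a) (hx : x ∈ OmegaModel n)
    {p : ℝ} (hp : 0 ≤ p) (γ α : ℝ) :
    ‖fderiv ℝ (phiMap n γi a) x‖ ^ p /
        (a * x (Fin.last n) ^ (a * γ - (n + 1 : ℝ)) * ‖phiMap n γi a x‖ ^ α) ≤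
      ((∑ i, (a * γi i - 1) ^ 2) + n + a ^ 2) ^ (p / 2) / (a * min 1 ((n + 1 : ℝ) ^ (α / 2))) *
        x (Fin.last n) ^ ((a - 1) * p - (a * γ - (n + 1) + a * α)) := by
  have ht := hx.1
  have hc : 0 < min 1 ((n + 1 : ℝ) ^ (α / 2)) := lt_min one_pos (by positivity)
  calc _ ≤ ((∑ i, (a * γi i - 1) ^ 2) + n + a ^ 2) ^ (p / 2) * x (Fin.last n) ^ ((a - 1) * p) /
        (a * x (Fin.last n) ^ (a * γ - (n + 1 : ℝ)) *
          (min 1 ((n + 1 : ℝ) ^ (α / 2)) * x (Fin.last n) ^ (a * α))) := by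
        gcongr
        · exact rpow_norm_fderiv_phiMap_le hγi ha.le hx hp
        · exact min_mul_rpow_le_rpow_norm_phiMap hγi ha.le hx α
    _ = _ := by
        rw [rpow_sub ht ((a - 1) * p), rpow_add ht (a * γ - (n + 1))]
        field_simp

end phiMap

theorem statement6_general (n : ℕ) (γi : Fin n → ℝ) (hγi : ∀ i, 1 ≤ γi i)
    (γ : ℝ)
    (α p a s : ℝ)
    (hp₂ : p < α + γ)
    (ha₁ : max 0 ((n + 1 - p) / (α + γ - p)) < a)
    (hs₁ : 1 < s) (hs₂ : s < n * p / (a * (α + γ - p) + p + 1)) :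
    ∫ x in OmegaModel n,
      (‖fderiv ℝ (phiMap n γi a) x‖ ^ p /
        (a * x (Fin.last n) ^ (a * γ - (n + 1 : ℝ)) * ‖phiMap n γi a x‖ ^ α))
        ^ (s / (p - s)) ≤
      (((∑ i, (a * γi i - 1) ^ 2) + n + a ^ 2) ^ (p / 2) /
          (a * min 1 ((n + 1 : ℝ) ^ (α / 2)))) ^ (s / (p - s)) := by
  have ha : 0 < a := (le_max_left _ _).trans_lt ha₁
  have hαγp : 0 < α + γ - p := sub_pos.2 hp₂
  have ha' : n + 1 - p < a * (α + γ - p) :=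
    (div_lt_iff₀ hαγp).1 ((le_max_right _ _).trans_lt ha₁)
  have hs : s * (a * (α + γ - p) + p + 1) < n * p :=
    (lt_div_iff₀ (by linarith [(n.cast_nonneg : (0 : ℝ) ≤ n)])).1 hs₂
  have hsp : s < p := by nlinarith
  have hq : 0 ≤ s / (p - s) := div_nonneg (by linarith) (by linarith)
  have hexp : 0 ≤ ((a - 1) * p - (a * γ - (n + 1) + a * α)) * (s / (p - s)) + n := by
    rw [mul_div_assoc', div_add' _ _ _ (by linarith : p - s ≠ 0)]
    exact div_nonneg (by nlinarith) (by linarith)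
  have hbase : ∀ x ∈ OmegaModel n, 0 ≤ ‖fderiv ℝ (phiMap n γi a) x‖ ^ p /
      (a * x (Fin.last n) ^ (a * γ - (n + 1 : ℝ)) * ‖phiMap n γi a x‖ ^ α) := fun x hx =>
    div_nonneg (rpow_nonneg (norm_nonneg _) _)
      (mul_nonneg (mul_nonneg ha.le (rpow_nonneg hx.1.le _)) (rpow_nonneg (norm_nonneg _) _))
  refine integral_le_of_ae_le_mul (by positivity) (ae_restrict_of_forall_mem
    (measurableSet_omegaModel n) fun x hx => ⟨rpow_nonneg (hbase x hx) _, ?_⟩)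
    (lintegral_omegaModel_rpow_last_le_one n hexp)
  calc _ ≤ _ := rpow_le_rpow (hbase x hx) (phiMap_integrand_le hγi ha hx (by linarith) γ α) hq
    _ = _ := by rw [mul_rpow (by positivity) (rpow_nonneg hx.1.le _), ← rpow_mul hx.1.le]

/-- Under `-(n+1) < α < (n+1)(p-1)`, `1 < p < α + γ`,
`max{0, (n+1-p)/(α+γ-p)} < a < p·n/(α+γ-p)`, if in addition
`1 < s < n·p/(a(α+γ-p)+p+1)` (the paper's `(n-1)p` in dimension `n`), then
`∫_{Ω_n} ( ‖Dφ_a(x)‖^p / (a·x_last^{aγ-(n+1)} · ‖φ_a(x)‖^α) )^{s/(p-s)} dx ≤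
( (Σ_i (aγ_i-1)^2 + n + a^2)^{p/2} / (a·c_a) )^{s/(p-s)}`,
where `c_a = min{1, (n+1)^{α/2}}`. (Paper dimension `n` is Lean `n + 1`.) -/
theorem statement6 (n : ℕ) (hn : 1 ≤ n) (γi : Fin n → ℝ) (hγi : ∀ i, 1 ≤ γi i)
    (γ : ℝ) (hγ : γ = 1 + ∑ i, γi i)
    (α p a s : ℝ)
    (hα₁ : -(n + 1 : ℝ) < α) (hα₂ : α < (n + 1) * (p - 1))
    (hp₁ : 1 < p) (hp₂ : p < α + γ)
    (ha₁ : max 0 ((n + 1 - p) / (α + γ - p)) < a)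
    (ha₂ : a < p * n / (α + γ - p))
    (hs₁ : 1 < s) (hs₂ : s < n * p / (a * (α + γ - p) + p + 1)) :
    ∫ x in OmegaModel n,
      (‖fderiv ℝ (phiMap n γi a) x‖ ^ p /
        (a * x (Fin.last n) ^ (a * γ - (n + 1 : ℝ)) * ‖phiMap n γi a x‖ ^ α))
        ^ (s / (p - s)) ≤
      (((∑ i, (a * γi i - 1) ^ 2) + n + a ^ 2) ^ (p / 2) /
          (a * min 1 ((n + 1 : ℝ) ^ (α / 2)))) ^ (s / (p - s)) :=
  statement6_general n γi hγi γ α p a s hp₂ ha₁ hs₁ hs₂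
end
end

section
/- Let n ≥ 2 be an integer, let γ ≥ n, suppose 1 < p < α + γ and max{−n, p(n−γ)/n} < α < n(p−1), set p* = γp/(α+γ−p), let a satisfy max{0, (n−p)/(α+γ−p)} < a < min{ n/γ, p(n−1)/(α+γ−p) }, and let q satisfy p ≤ q < p*. Then there exist real numbers s and r such that 1 < s < np/( a(α+γ−p) + p ), s < r < ns/(n − s), and nq < aγr. -/
/-!
Write `A = α + γ - p`, `s₀ = np/(aA + p)` and `L = nq/(aγ)`. The bounds on `a` give
`1 < s₀ < n`, and `q < γp/A` is exactly `nL/(n + L) < s₀`. Since `t ↦ nt/(n - t)` inverts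
`u ↦ nu/(n + u)` and is increasing, any `s` with `max 1 (nL/(n + L)) < s < s₀` has
`max s L < ns/(n - s)`, and any `r` strictly in between satisfies `nq < aγr`.
-/

lemma one_lt_div_add_of_lt {n p c : ℝ} (hp : 0 < p) (hc : 0 < c) (h : c < p * (n - 1)) :
    1 < n * p / (c + p) := by
  rw [one_lt_div (by linarith)]
  linarith

lemma div_add_lt_of_pos {n p c : ℝ} (hn : 0 < n) (hp : 0 < p) (hc : 0 < c) :
    n * p / (c + p) < n := by
  rw [div_lt_iff₀ (by linarith)]
  nlinarith

lemma div_add_lt_div_add_of_mul_lt {n p c L : ℝ} (hn : 0 < n) (hp : 0 < p) (hc : 0 < c)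
    (hL : 0 < L) (h : L * c < n * p) : n * L / (n + L) < n * p / (c + p) := by
  rw [div_lt_div_iff₀ (by linarith) (by linarith)]
  nlinarith

lemma lt_div_sub_of_div_add_lt {n s L : ℝ} (hnL : 0 < n + L) (hs : s < n)
    (h : n * L / (n + L) < s) : L < n * s / (n - s) := by
  rw [div_lt_iff₀ hnL] at h
  rw [lt_div_iff₀ (by linarith)]
  linarith

theorem statement15_general (n : ℕ) (hn : 2 ≤ n) (γ α p a q : ℝ) (hγ : (n : ℝ) ≤ γ)
    (hp₁ : 1 < p) (hp₂ : p < α + γ)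
    (ha₁ : max 0 ((n - p) / (α + γ - p)) < a)
    (ha₂ : a < min ((n : ℝ) / γ) (p * (n - 1) / (α + γ - p)))
    (hq₁ : p ≤ q) (hq₂ : q < γ * p / (α + γ - p)) :
    ∃ s r : ℝ, 1 < s ∧ s < n * p / (a * (α + γ - p) + p) ∧
      s < r ∧ r < n * s / (n - s) ∧ n * q < a * γ * r := by
  have hn₀ : (0 : ℝ) < n := Nat.cast_pos.2 (by omega)
  have hp : 0 < p := by linarith
  have hA : 0 < α + γ - p := by linarith
  have ha : 0 < a := (le_max_left _ _).trans_lt ha₁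
  have haγ : 0 < a * γ := mul_pos ha (by linarith)
  have hc : 0 < a * (α + γ - p) := mul_pos ha hA
  have hcp : a * (α + γ - p) < p * (n - 1) :=
    (lt_div_iff₀ hA).1 (ha₂.trans_le (min_le_right _ _))
  set L := n * q / (a * γ) with hL_def
  have hL : 0 < L := div_pos (mul_pos hn₀ (by linarith)) haγ
  have hLc : L * (a * (α + γ - p)) < n * p := by
    rw [hL_def, div_mul_eq_mul_div, div_lt_iff₀ haγ]
    linarith [mul_lt_mul_of_pos_left ((lt_div_iff₀ hA).1 hq₂) (mul_pos hn₀ ha)]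
  obtain ⟨s, hs_lo, hs_hi⟩ := exists_between (max_lt (one_lt_div_add_of_lt hp hc hcp)
    (div_add_lt_div_add_of_mul_lt hn₀ hp hc hL hLc))
  have hs₁ : 1 < s := (le_max_left _ _).trans_lt hs_lo
  have hsn : s < n := hs_hi.trans (div_add_lt_of_pos hn₀ hp hc)
  have hs_conj : s < n * s / (n - s) :=
    lt_div_sub_of_div_add_lt (by linarith) hsn ((div_lt_iff₀ (by linarith)).2 (by nlinarith))
  have hL_conj : L < n * s / (n - s) :=
    lt_div_sub_of_div_add_lt (by linarith) hsn ((le_max_right _ _).trans_lt hs_lo)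
  obtain ⟨r, hr_lo, hr_hi⟩ := exists_between (max_lt hs_conj hL_conj)
  have hLr : L < r := (le_max_right _ _).trans_lt hr_lo
  refine ⟨s, r, hs₁, hs_hi, (le_max_left _ _).trans_lt hr_lo, hr_hi, ?_⟩
  rwa [hL_def, div_lt_iff₀ haγ, mul_comm r] at hLr

/-- Let `n ≥ 2` be an integer, `γ ≥ n`, `1 < p < α + γ`,
`max{-n, p(n-γ)/n} < α < n(p-1)`, `p* = γp/(α+γ-p)`,
`max{0, (n-p)/(α+γ-p)} < a < min{n/γ, p(n-1)/(α+γ-p)}`, and `p ≤ q < p*`.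
Then there exist reals `s, r` with `1 < s < np/(a(α+γ-p)+p)`, `s < r < ns/(n-s)` and
`nq < aγr`. -/
theorem statement15 (n : ℕ) (hn : 2 ≤ n) (γ α p a q : ℝ) (hγ : (n : ℝ) ≤ γ)
    (hp₁ : 1 < p) (hp₂ : p < α + γ)
    (hα₁ : max (-(n : ℝ)) (p * (n - γ) / n) < α) (hα₂ : α < n * (p - 1))
    (ha₁ : max 0 ((n - p) / (α + γ - p)) < a)
    (ha₂ : a < min ((n : ℝ) / γ) (p * (n - 1) / (α + γ - p)))
    (hq₁ : p ≤ q) (hq₂ : q < γ * p / (α + γ - p)) :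
    ∃ s r : ℝ, 1 < s ∧ s < n * p / (a * (α + γ - p) + p) ∧
      s < r ∧ r < n * s / (n - s) ∧ n * q < a * γ * r :=
  statement15_general n hn γ α p a q hγ hp₁ hp₂ ha₁ ha₂ hq₁ hq₂
end
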